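/- For any density matrices ρ₀, ρ₁ on ℂ^n there exist positive semidefinite matrices M₀, M₁ with M₀ + M₁ = I such that the (real, nonnegative) success probability satisfies (1/2)·Tr(M₀ρ₀) + (1/2)·Tr(M₁ρ₁) ≥ (1/2)(1 + Δ(ρ₀,ρ₁)). In other words, a uniformly random one of two states can be identified by some two-outcome measurement with probability at least (1/2)(1 + Δ(ρ₀,ρ₁)). -/

import Mathlib

/-!
Let `A = ρ₀ - ρ₁` and let `P` be the spectral projection of `A` onto its nonnegative
eigenvalues; measure with `M₀ = P`, `M₁ = 1 - P`. The success probability is then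
`(1 + Re Tr (P A)) / 2`, and `Tr (P A)` is the sum of the positive eigenvalues of `A`.
Since the eigenvalues of `A` sum to `Tr A = 0` while `‖A‖₁` is the sum of their absolute
values, that sum is `‖A‖₁ / 2 = Δ(ρ₀, ρ₁)`.
-/

open Matrix Kronecker ComplexOrder

/-- The trace norm `‖A‖₁ = Tr √(Aᴴ A)` of a complex matrix. -/
noncomputable def traceNorm {n : Type*} [Fintype n] [DecidableEq n] (A : Matrix n n ℂ) : ℝ :=
  (((Matrix.posSemidef_conjTranspose_mul_self A).1.eigenvectorUnitary.1 *
      diagonal (((↑) : ℝ → ℂ) ∘ (√·) ∘ (Matrix.posSemidef_conjTranspose_mul_self A).1.eigenvalues) *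
      (star (Matrix.posSemidef_conjTranspose_mul_self A).1.eigenvectorUnitary : Matrix n n ℂ)).trace).re

/-- The trace distance `Δ(ρ,σ) = ‖ρ - σ‖₁ / 2`. -/
noncomputable def traceDist {n : Type*} [Fintype n] [DecidableEq n] (ρ σ : Matrix n n ℂ) : ℝ :=
  traceNorm (ρ - σ) / 2

open scoped Classical in
/-- Positive semidefinite square root (junk value `0` on non-PSD matrices). -/
noncomputable def psdSqrt {n : Type*} [Fintype n] [DecidableEq n] (A : Matrix n n ℂ) :
    Matrix n n ℂ :=
  if h : A.PosSemidef then
    h.1.eigenvectorUnitary.1 * diagonal ((↑) ∘ (√·) ∘ h.1.eigenvalues) *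
      (star h.1.eigenvectorUnitary : Matrix n n ℂ) else 0

/-- The fidelity `F(ρ,σ) = ‖√ρ √σ‖₁`. -/
noncomputable def fidelity {n : Type*} [Fintype n] [DecidableEq n] (ρ σ : Matrix n n ℂ) : ℝ :=
  traceNorm (psdSqrt ρ * psdSqrt σ)

/-- A density matrix: positive semidefinite with trace 1. -/
def IsDensityMatrix {n : Type*} [Fintype n] [DecidableEq n] (ρ : Matrix n n ℂ) : Prop :=
  ρ.PosSemidef ∧ ρ.trace = 1

/-- The projector `|b⟩⟨b|` on ℂ². -/
noncomputable def proj (b : Bool) : Matrix Bool Bool ℂ := Matrix.single b b 1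

/-- The strong oblivious transfer channel `F_{(x₀,x₁)}`. -/
noncomputable def sotChannel (x₀ x₁ : Bool) (ρ : Matrix (Bool × Bool) (Bool × Bool) ℂ) :
    Matrix (Bool × Bool) (Bool × Bool) ℂ :=
  ∑ i : Bool, ∑ i' : Bool,
    ρ (i, i') (i, i') •
      (((1/2 : ℂ) • (1 : Matrix Bool Bool ℂ)) ⊗ₖ proj (xor (bif xor i i' then x₁ else x₀) i'))

namespace Matrix

open scoped MatrixOrder

variable {𝕜 n : Type*} [RCLike 𝕜] [Fintype n] [DecidableEq n]

lemma IsHermitian.trace_cfc {A : Matrix n n 𝕜} (hA : A.IsHermitian) (f : ℝ → ℝ) :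
    (cfc f A).trace = ∑ i, (f (hA.eigenvalues i) : 𝕜) := by
  rw [hA.cfc_eq, IsHermitian.cfc, Unitary.conjStarAlgAut_apply, trace_mul_cycle,
    Unitary.coe_star_mul_self, one_mul, trace_diagonal]
  rfl

/-- For `A = ρ₀ - ρ₁` this projection is the Helstrom measurement. -/
noncomputable def nonnegSpectralProj (A : Matrix n n 𝕜) : Matrix n n 𝕜 :=
  cfc (fun x : ℝ => if 0 ≤ x then 1 else 0) A

lemma posSemidef_nonnegSpectralProj (A : Matrix n n 𝕜) : A.nonnegSpectralProj.PosSemidef :=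
  nonneg_iff_posSemidef.mp <| cfc_nonneg fun x _ => by split_ifs <;> norm_num

lemma IsHermitian.posSemidef_one_sub_nonnegSpectralProj {A : Matrix n n 𝕜}
    (hA : A.IsHermitian) : (1 - A.nonnegSpectralProj).PosSemidef := by
  have hP := A.finite_real_spectrum.continuousOn fun x : ℝ => if 0 ≤ x then (1 : ℝ) else 0
  rw [← nonneg_iff_posSemidef, nonnegSpectralProj, ← cfc_one ℝ A, ← cfc_sub _ _ A]
  exact cfc_nonneg fun x _ => by split_ifs <;> norm_num

lemma IsHermitian.re_trace_nonnegSpectralProj_mul {A : Matrix n n 𝕜} (hA : A.IsHermitian) :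
    RCLike.re (A.nonnegSpectralProj * A).trace = ∑ i, max (hA.eigenvalues i) 0 := by
  have hP := A.finite_real_spectrum.continuousOn fun x : ℝ => if 0 ≤ x then (1 : ℝ) else 0
  have hPA : A.nonnegSpectralProj * A = cfc (fun x : ℝ => (if 0 ≤ x then 1 else 0) * x) A := by
    rw [cfc_mul _ _ A hP, cfc_id' ℝ A, nonnegSpectralProj]
  rw [hPA, hA.trace_cfc, map_sum]
  refine Finset.sum_congr rfl fun i _ => ?_
  split_ifs with h
  · simp [h]
  · simp [(not_le.mp h).le]

lemma traceNorm_eq_re_trace_cfc_sqrt (A : Matrix n n ℂ) :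
    traceNorm A = (cfc Real.sqrt (Aᴴ * A)).trace.re := by
  rw [(posSemidef_conjTranspose_mul_self A).isHermitian.cfc_eq, IsHermitian.cfc,
    Unitary.conjStarAlgAut_apply]
  rfl

lemma IsHermitian.traceNorm_eq_sum_abs_eigenvalues {A : Matrix n n ℂ} (hA : A.IsHermitian) :
    traceNorm A = ∑ i, |hA.eigenvalues i| := by
  have hsq : Aᴴ * A = cfc (· ^ 2 : ℝ → ℝ) A := by
    rw [hA.eq, ← sq]; exact (cfc_pow_id (R := ℝ) A 2 hA).symm
  rw [traceNorm_eq_re_trace_cfc_sqrt, hsq, ← cfc_comp .., hA.trace_cfc, Complex.re_sum]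
  simp [Real.sqrt_sq_eq_abs]

lemma IsHermitian.re_trace_nonnegSpectralProj_mul_eq {A : Matrix n n ℂ} (hA : A.IsHermitian) :
    (A.nonnegSpectralProj * A).trace.re = (traceNorm A + A.trace.re) / 2 := by
  have hmax (x : ℝ) : max x 0 = (|x| + x) / 2 := by
    rcases le_total 0 x with h | h <;> simp [h, abs_of_nonneg, abs_of_nonpos]
  rw [← RCLike.re_eq_complex_re, hA.re_trace_nonnegSpectralProj_mul,
    hA.traceNorm_eq_sum_abs_eigenvalues, hA.trace_eq_sum_eigenvalues, map_sum]
  simp [hmax, ← Finset.sum_div, Finset.sum_add_distrib]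

lemma trace_mul_add_trace_one_sub_mul {R : Type*} [Ring R] (M ρ σ : Matrix n n R) :
    (M * ρ).trace + ((1 - M) * σ).trace = σ.trace + (M * (ρ - σ)).trace := by
  rw [sub_mul, mul_sub, one_mul, trace_sub, trace_sub]
  abel

end Matrix

/-- Holevo–Helstrom, achievability direction. -/
theorem stmt_2 {n : ℕ} (ρ₀ ρ₁ : Matrix (Fin n) (Fin n) ℂ)
    (h₀ : IsDensityMatrix ρ₀) (h₁ : IsDensityMatrix ρ₁) :
    ∃ M₀ M₁ : Matrix (Fin n) (Fin n) ℂ, M₀.PosSemidef ∧ M₁.PosSemidef ∧ M₀ + M₁ = 1 ∧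
      (1/2 : ℝ) * ((M₀ * ρ₀).trace).re + (1/2 : ℝ) * ((M₁ * ρ₁).trace).re ≥
        (1/2 : ℝ) * (1 + traceDist ρ₀ ρ₁) := by
  have hA : (ρ₀ - ρ₁).IsHermitian := h₀.1.isHermitian.sub h₁.1.isHermitian
  set P := (ρ₀ - ρ₁).nonnegSpectralProj
  refine ⟨P, 1 - P, posSemidef_nonnegSpectralProj _, hA.posSemidef_one_sub_nonnegSpectralProj,
    add_sub_cancel P 1, ?_⟩
  have hsuccess := congrArg Complex.re (trace_mul_add_trace_one_sub_mul P ρ₀ ρ₁)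
  have hbias := hA.re_trace_nonnegSpectralProj_mul_eq
  rw [trace_sub, h₀.2, h₁.2, sub_self, Complex.zero_re, add_zero] at hbias
  rw [Complex.add_re, Complex.add_re, h₁.2, Complex.one_re] at hsuccess
  rw [traceDist]
  linarith
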